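/- For every formula A and every k ≥ 1, the arrow A⁺ → A ∨ A² ∨ … ∨ Aᵏ ∨ (Aᵏ)⁺ ∨ (Aᵏ)⁺·A ∨ (Aᵏ)⁺·A² ∨ … ∨ (Aᵏ)⁺·A^{k−1} is derivable in the calculus ACT⁺ (where Aⁱ denotes the i-fold product of A with itself). -/

import Mathlib

/-!
Write `P = (Aᵏ)⁺` and `D` for the disjunction on the right. By iteration induction it suffices
to show `A → D` and `D · D → D`. Powers of `A` commute with each other, and iteration induction
lifts this to `Aⁱ · P → P · Aⁱ`. Together with `Aᵏ → P` and `P · P → P` (hence `P · Aᵏ → P`),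
every product of two disjuncts of `D` reduces to a power `Aᵐ` or to `P · Aᵐ`, whose exponent can
then be lowered by `k` until it names a disjunct.
-/

/-- Formulae: primitive types, product `mul`, left division `ldiv A B = A \ B`,
right division `rdiv B A = B / A`, additive disjunction `or`, and positive
iteration `plus A = A⁺`. -/
inductive Fm : Type where
  | pr : ℕ → Fm
  | mul : Fm → Fm → Fm
  | ldiv : Fm → Fm → Fm   -- `ldiv A B` is `A \ B`
  | rdiv : Fm → Fm → Fm   -- `rdiv B A` is `B / A`
  | or : Fm → Fm → Fm
  | plus : Fm → Fm

/-- Derivability of arrows `A → B` in the calculus ACT⁺ (action logic with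
positive iteration, Lambek's restriction built into the connectives). -/
inductive Act : Fm → Fm → Prop where
  | id (A : Fm) : Act A A
  | assoc_l (A B C : Fm) : Act (Fm.mul (Fm.mul A B) C) (Fm.mul A (Fm.mul B C))
  | assoc_r (A B C : Fm) : Act (Fm.mul A (Fm.mul B C)) (Fm.mul (Fm.mul A B) C)
  | plus_ax (A : Fm) : Act (Fm.or A (Fm.mul (Fm.plus A) (Fm.plus A))) (Fm.plus A)
  | res_rdiv_intro {A B C : Fm} : Act (Fm.mul A B) C → Act A (Fm.rdiv C B)
  | res_rdiv_elim {A B C : Fm} : Act A (Fm.rdiv C B) → Act (Fm.mul A B) C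
  | res_ldiv_intro {A B C : Fm} : Act (Fm.mul A B) C → Act B (Fm.ldiv A C)
  | res_ldiv_elim {A B C : Fm} : Act B (Fm.ldiv A C) → Act (Fm.mul A B) C
  | trans {A B C : Fm} : Act A B → Act B C → Act A C
  | or_r₁ {A B₁ B₂ : Fm} : Act A B₁ → Act A (Fm.or B₁ B₂)
  | or_r₂ {A B₁ B₂ : Fm} : Act A B₂ → Act A (Fm.or B₁ B₂)
  | or_l {A₁ A₂ B : Fm} : Act A₁ B → Act A₂ B → Act (Fm.or A₁ A₂) B
  | plus_ind {A B : Fm} : Act (Fm.or A (Fm.mul B B)) B → Act (Fm.plus A) B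
/-- `apow A i` is the `(i+1)`-fold product `A·A·…·A` (associated to the left),
i.e. `apow A (i-1) = Aⁱ` for `i ≥ 1`. -/
def apow (A : Fm) : ℕ → Fm
  | 0 => A
  | n + 1 => Fm.mul (apow A n) A

/-- `bigOr A [B₁, …, Bₘ]` is the disjunction `A ∨ B₁ ∨ … ∨ Bₘ`
(associated to the left). -/
def bigOr : Fm → List Fm → Fm
  | A, [] => A
  | A, B :: l => bigOr (Fm.or A B) l

local infixl:70 " ⊙ " => Fm.mul

local infix:50 " ⟹ " => Act

instance : Trans Act Act Act := ⟨Act.trans⟩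

namespace Act

theorem mul_mono {A B C D : Fm} (hAB : A ⟹ B) (hCD : C ⟹ D) : A ⊙ C ⟹ B ⊙ D :=
  calc A ⊙ C
    _ ⟹ B ⊙ C := res_rdiv_elim (hAB.trans (res_rdiv_intro (id _)))
    _ ⟹ B ⊙ D := res_ldiv_elim (hCD.trans (res_ldiv_intro (id _)))

theorem mul_mono_left {A B : Fm} (C : Fm) (h : A ⟹ B) : A ⊙ C ⟹ B ⊙ C := h.mul_mono (id C)

theorem mul_mono_right {A B : Fm} (C : Fm) (h : A ⟹ B) : C ⊙ A ⟹ C ⊙ B := (id C).mul_mono h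

theorem le_plus (A : Fm) : A ⟹ Fm.plus A := (or_r₁ (id _)).trans (plus_ax A)

theorem plus_mul_plus (A : Fm) : Fm.plus A ⊙ Fm.plus A ⟹ Fm.plus A :=
  (or_r₂ (id _)).trans (plus_ax A)

theorem plus_mul_self (A : Fm) : Fm.plus A ⊙ A ⟹ Fm.plus A :=
  (mul_mono_right _ (le_plus A)).trans (plus_mul_plus A)

/-- Iteration induction applied to `B = X \ (Y⁺ · X)`. -/
theorem mul_plus_comm {X Y : Fm} (h : X ⊙ Y ⟹ Y ⊙ X) : X ⊙ Fm.plus Y ⟹ Fm.plus Y ⊙ X := by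
  set B := Fm.ldiv X (Fm.plus Y ⊙ X)
  have hXB : X ⊙ B ⟹ Fm.plus Y ⊙ X := res_ldiv_elim (id B)
  have hY : Y ⟹ B := res_ldiv_intro (h.trans (mul_mono_left X (le_plus Y)))
  have hBB : B ⊙ B ⟹ B := res_ldiv_intro <|
    calc X ⊙ (B ⊙ B)
      _ ⟹ X ⊙ B ⊙ B := assoc_r _ _ _
      _ ⟹ Fm.plus Y ⊙ X ⊙ B := mul_mono_left B hXB
      _ ⟹ Fm.plus Y ⊙ (X ⊙ B) := assoc_l _ _ _
      _ ⟹ Fm.plus Y ⊙ (Fm.plus Y ⊙ X) := mul_mono_right _ hXB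
      _ ⟹ Fm.plus Y ⊙ Fm.plus Y ⊙ X := assoc_r _ _ _
      _ ⟹ Fm.plus Y ⊙ X := mul_mono_left X (plus_mul_plus Y)
  exact (mul_mono_right X (plus_ind (or_l hY hBB))).trans hXB

end Act

section bigOr

theorem le_bigOr_of_le {B : Fm} : ∀ {A : Fm} (l : List Fm), B ⟹ A → B ⟹ bigOr A l
  | _, [], h => h
  | _, _ :: l, h => le_bigOr_of_le l (Act.or_r₁ h)

theorem le_bigOr_of_mem {B : Fm} : ∀ (A : Fm) {l : List Fm}, B ∈ l → B ⟹ bigOr A l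
  | _, [], h => absurd h List.not_mem_nil
  | _, C :: l, h => by
    rcases List.mem_cons.mp h with rfl | hl
    · exact le_bigOr_of_le l (Act.or_r₂ (Act.id B))
    · exact le_bigOr_of_mem (l := l) _ hl

theorem bigOr_le {C : Fm} : ∀ {A : Fm} {l : List Fm}, A ⟹ C → (∀ B ∈ l, B ⟹ C) → bigOr A l ⟹ C
  | _, [], hA, _ => hA
  | _, B :: l, hA, hl =>
    bigOr_le (l := l) (Act.or_l hA (hl B List.mem_cons_self)) fun B' hB' =>
      hl B' (List.mem_cons_of_mem _ hB')

end bigOr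

section apow

variable (A : Fm)

theorem apow_mul_apow (m : ℕ) : ∀ n, apow A m ⊙ apow A n ⟹ apow A (m + n + 1)
  | 0 => Act.id _
  | n + 1 => (Act.assoc_r _ _ _).trans (Act.mul_mono_left A (apow_mul_apow m n))

theorem apow_le_apow_mul (m : ℕ) : ∀ n, apow A (m + n + 1) ⟹ apow A m ⊙ apow A n
  | 0 => Act.id _
  | n + 1 => (Act.mul_mono_left A (apow_le_apow_mul m n)).trans (Act.assoc_l _ _ _)

theorem apow_mul_comm (m n : ℕ) : apow A m ⊙ apow A n ⟹ apow A n ⊙ apow A m := by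
  have h := apow_le_apow_mul A n m
  rw [Nat.add_comm n m] at h
  exact (apow_mul_apow A m n).trans h

end apow

/-- The disjunction `D` for `Aᵏ` is `plusDecomp A (k - 1)`, since `apow A K = A^{K+1}`. -/
def plusDecomp (A : Fm) (K : ℕ) : Fm :=
  bigOr (apow A 0)
    (((List.range K).map fun i => apow A (i + 1)) ++
      [Fm.plus (apow A K)] ++
      ((List.range K).map fun i => Fm.mul (Fm.plus (apow A K)) (apow A i)))

section plusDecomp

variable (A : Fm) (K : ℕ)

local notation "P" => Fm.plus (apow A K)

local notation "D" => plusDecomp A K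

theorem apow_le_plusDecomp_of_le {m : ℕ} (hm : m ≤ K) : apow A m ⟹ D := by
  rcases m with _ | m
  · exact le_bigOr_of_le _ (Act.id _)
  · exact le_bigOr_of_mem _ (by simp only [List.mem_append, List.mem_map, List.mem_range]; grind)

theorem plus_apow_le_plusDecomp : P ⟹ D :=
  le_bigOr_of_mem _ (by simp)

theorem plus_mul_apow_le_plusDecomp_of_lt {m : ℕ} (hm : m < K) : P ⊙ apow A m ⟹ D :=
  le_bigOr_of_mem _ (by simp only [List.mem_append, List.mem_map, List.mem_range]; grind)

theorem plusDecomp_le {Z : Fm} (hpow : ∀ m, apow A m ⟹ Z) (hplus : P ⟹ Z)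
    (hplusMul : ∀ m, P ⊙ apow A m ⟹ Z) : D ⟹ Z := by
  refine bigOr_le (hpow 0) fun B hB => ?_
  simp only [List.mem_append, List.mem_map, List.mem_range, List.mem_singleton] at hB
  rcases hB with (⟨i, -, rfl⟩ | rfl) | ⟨i, -, rfl⟩
  exacts [hpow (i + 1), hplus, hplusMul i]

theorem plus_mul_apow_add_le (m : ℕ) : P ⊙ apow A (K + m + 1) ⟹ P ⊙ apow A m :=
  calc P ⊙ apow A (K + m + 1)
    _ ⟹ P ⊙ (apow A K ⊙ apow A m) := Act.mul_mono_right _ (apow_le_apow_mul A K m)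
    _ ⟹ P ⊙ apow A K ⊙ apow A m := Act.assoc_r _ _ _
    _ ⟹ P ⊙ apow A m := Act.mul_mono_left _ (Act.plus_mul_self _)

theorem plus_mul_apow_le_plusDecomp (m : ℕ) : P ⊙ apow A m ⟹ D := by
  induction m using Nat.strong_induction_on with
  | _ m ih =>
    rcases lt_trichotomy m K with hlt | rfl | hgt
    · exact plus_mul_apow_le_plusDecomp_of_lt A K hlt
    · exact (Act.plus_mul_self _).trans (plus_apow_le_plusDecomp A m)
    · obtain ⟨j, rfl⟩ := Nat.exists_eq_add_of_lt hgt
      exact (plus_mul_apow_add_le A K j).trans (ih j (by omega))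

theorem apow_le_plusDecomp (m : ℕ) : apow A m ⟹ D := by
  rcases le_or_gt m K with hle | hgt
  · exact apow_le_plusDecomp_of_le A K hle
  · obtain ⟨j, rfl⟩ := Nat.exists_eq_add_of_lt hgt
    calc apow A (K + j + 1)
      _ ⟹ apow A K ⊙ apow A j := apow_le_apow_mul A K j
      _ ⟹ P ⊙ apow A j := Act.mul_mono_left _ (Act.le_plus _)
      _ ⟹ D := plus_mul_apow_le_plusDecomp A K j

theorem apow_mul_plus_le (m : ℕ) : apow A m ⊙ P ⟹ P ⊙ apow A m :=
  Act.mul_plus_comm (apow_mul_comm A m K)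

theorem apow_mul_plusDecomp_le (m : ℕ) : apow A m ⊙ D ⟹ D := by
  refine Act.res_ldiv_elim (plusDecomp_le A K (fun n => ?_) ?_ fun n => ?_) <;>
    apply Act.res_ldiv_intro
  · exact (apow_mul_apow A m n).trans (apow_le_plusDecomp A K _)
  · exact (apow_mul_plus_le A K m).trans (plus_mul_apow_le_plusDecomp A K m)
  · calc apow A m ⊙ (P ⊙ apow A n)
      _ ⟹ apow A m ⊙ P ⊙ apow A n := Act.assoc_r _ _ _
      _ ⟹ P ⊙ apow A m ⊙ apow A n := Act.mul_mono_left _ (apow_mul_plus_le A K m)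
      _ ⟹ P ⊙ (apow A m ⊙ apow A n) := Act.assoc_l _ _ _
      _ ⟹ P ⊙ apow A (m + n + 1) := Act.mul_mono_right _ (apow_mul_apow A m n)
      _ ⟹ D := plus_mul_apow_le_plusDecomp A K _

theorem plus_mul_plusDecomp_le : P ⊙ D ⟹ D := by
  refine Act.res_ldiv_elim (plusDecomp_le A K (fun n => ?_) ?_ fun n => ?_) <;>
    apply Act.res_ldiv_intro
  · exact plus_mul_apow_le_plusDecomp A K n
  · exact (Act.plus_mul_plus _).trans (plus_apow_le_plusDecomp A K)
  · calc P ⊙ (P ⊙ apow A n)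
      _ ⟹ P ⊙ P ⊙ apow A n := Act.assoc_r _ _ _
      _ ⟹ P ⊙ apow A n := Act.mul_mono_left _ (Act.plus_mul_plus _)
      _ ⟹ D := plus_mul_apow_le_plusDecomp A K n

theorem plusDecomp_mul_self_le : D ⊙ D ⟹ D := by
  refine Act.res_rdiv_elim (plusDecomp_le A K (fun m => ?_) ?_ fun m => ?_) <;>
    apply Act.res_rdiv_intro
  · exact apow_mul_plusDecomp_le A K m
  · exact plus_mul_plusDecomp_le A K
  · calc P ⊙ apow A m ⊙ D
      _ ⟹ P ⊙ (apow A m ⊙ D) := Act.assoc_l _ _ _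
      _ ⟹ P ⊙ D := Act.mul_mono_right _ (apow_mul_plusDecomp_le A K m)
      _ ⟹ D := plus_mul_plusDecomp_le A K

theorem plus_le_plusDecomp : Fm.plus A ⟹ D :=
  Act.plus_ind (Act.or_l (apow_le_plusDecomp A K 0) (plusDecomp_mul_self_le A K))

end plusDecomp

theorem plus_decomposition_general (A : Fm) (k : ℕ) :
    Act (Fm.plus A)
      (bigOr (apow A 0)
        (((List.range (k - 1)).map fun i => apow A (i + 1)) ++
          [Fm.plus (apow A (k - 1))] ++
          ((List.range (k - 1)).map fun i =>
            Fm.mul (Fm.plus (apow A (k - 1))) (apow A i)))) :=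
  plus_le_plusDecomp A (k - 1)

/-- For every formula `A` and every `k ≥ 1`, the arrow
`A⁺ → A ∨ A² ∨ … ∨ Aᵏ ∨ (Aᵏ)⁺ ∨ (Aᵏ)⁺·A ∨ (Aᵏ)⁺·A² ∨ … ∨ (Aᵏ)⁺·A^{k−1}`
is derivable in ACT⁺. -/
theorem plus_decomposition (A : Fm) (k : ℕ) (hk : 1 ≤ k) :
    Act (Fm.plus A)
      (bigOr (apow A 0)
        (((List.range (k - 1)).map fun i => apow A (i + 1)) ++
          [Fm.plus (apow A (k - 1))] ++
          ((List.range (k - 1)).map fun i =>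
            Fm.mul (Fm.plus (apow A (k - 1))) (apow A i)))) :=
  plus_decomposition_general A k
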